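/- Let n ≥ 5 and let G be a simple graph containing pairwise distinct vertices v₀, v₁, ..., v_{n−1} forming a cycle (so v_i is adjacent to v_{i+1} for 0 ≤ i ≤ n−2, and v_{n−1} is adjacent to v₀), together with a vertex w distinct from all the v_i that is adjacent to v₀. Suppose G contains no 4-cycle, i.e., there are no four pairwise distinct vertices p, q, r, s with pq, qr, rs, and sp all edges of G. Color grey the edge wv₀ together with the edges v_iv_{i+1} for 0 ≤ i ≤ n−2 (so the grey edges form a path w–v₀–v₁–⋯–v_{n−1}), and color all other edges of G black (including v_{n−1}v₀). Then every color-preserving automorphism of this 2-colored graph fixes w and fixes each vertex v_i. -/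

import Mathlib

/-- A graph automorphism `φ` of `G` is color-preserving with respect to the
edge 2-coloring `col` (say `true` = grey, `false` = black) if every edge and
its image have the same color. -/
def IsColorPreserving {V : Type*} (G : SimpleGraph V) (col : Sym2 V → Bool)
    (φ : G ≃g G) : Prop :=
  ∀ u v : V, G.Adj u v → col s(φ u, φ v) = col s(u, v)

/-! A color-preserving automorphism maps the grey path `w, v₀, …, v_{n-1}` onto itself, so it
fixes it or reverses it, since its endpoints are the only vertices with a single grey
neighbour. A reversal would send the black edge `v_{n-1} v₀` to an edge `w v_{n-2}`, closing the
4-cycle `w v₀ v_{n-1} v_{n-2}`. -/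

section PathEdge

variable {V : Type*}

def IsPathEdge (u : ℕ → V) (m : ℕ) (a b : V) : Prop :=
  ∃ i < m, s(a, b) = s(u i, u (i + 1))

variable {u : ℕ → V} {m : ℕ}

theorem isPathEdge_succ {i : ℕ} (hi : i < m) : IsPathEdge u m (u i) (u (i + 1)) :=
  ⟨i, hi, rfl⟩

theorem IsPathEdge.symm {a b : V} (h : IsPathEdge u m a b) : IsPathEdge u m b a := by
  obtain ⟨i, hi, h⟩ := h
  exact ⟨i, hi, Sym2.eq_swap.trans h⟩

theorem IsPathEdge.exists_eq {a b : V} (h : IsPathEdge u m a b) : ∃ i ≤ m, a = u i := by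
  obtain ⟨i, hi, h⟩ := h
  rcases Sym2.eq_iff.1 h with ⟨ha, -⟩ | ⟨ha, -⟩
  exacts [⟨i, hi.le, ha⟩, ⟨i + 1, hi, ha⟩]

theorem isPathEdge_apply_iff (hu : Set.InjOn u (Set.Iic m)) {i : ℕ} (hi : i ≤ m) {x : V} :
    IsPathEdge u m (u i) x ↔ (i < m ∧ x = u (i + 1)) ∨ (0 < i ∧ x = u (i - 1)) := by
  have hinj : ∀ j ≤ m, u i = u j → i = j := fun j hj h => hu hi hj h
  constructor
  · rintro ⟨j, hj, h⟩
    rcases Sym2.eq_iff.1 h with ⟨hij, hx⟩ | ⟨hij, hx⟩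
    · obtain rfl := hinj j hj.le hij
      exact Or.inl ⟨hj, hx⟩
    · obtain rfl := hinj (j + 1) hj hij
      exact Or.inr ⟨j.succ_pos, by simpa using hx⟩
  · rintro (⟨hi, rfl⟩ | ⟨hi, rfl⟩)
    · exact isPathEdge_succ hi
    · cases i with
      | zero => omega
      | succ j => exact (isPathEdge_succ (u := u) (by omega : j < m)).symm

theorem isPathEdge_zero_iff (hu : Set.InjOn u (Set.Iic m)) (hm : 0 < m) {x : V} :
    IsPathEdge u m (u 0) x ↔ x = u 1 := by
  simp [isPathEdge_apply_iff hu (Nat.zero_le m), hm]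

theorem isPathEdge_last_iff (hu : Set.InjOn u (Set.Iic m)) (hm : 0 < m) {x : V} :
    IsPathEdge u m (u m) x ↔ x = u (m - 1) := by
  simp [isPathEdge_apply_iff hu le_rfl, hm]

theorem eq_zero_or_eq_last_of_isPathEdge_iff (hu : Set.InjOn u (Set.Iic m)) {a b : V}
    (hab : ∀ x, IsPathEdge u m a x ↔ x = b) : a = u 0 ∨ a = u m := by
  obtain ⟨i, hi, rfl⟩ := ((hab b).2 rfl).exists_eq
  by_contra! hend
  have hi0 : 0 < i := Nat.pos_of_ne_zero (by rintro rfl; exact hend.1 rfl)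
  have him : i < m := lt_of_le_of_ne hi (by rintro rfl; exact hend.2 rfl)
  have hnext := (hab _).1 ((isPathEdge_apply_iff hu hi).2 (Or.inl ⟨him, rfl⟩))
  have hprev := (hab _).1 ((isPathEdge_apply_iff hu hi).2 (Or.inr ⟨hi0, rfl⟩))
  have := hu (Set.mem_Iic.2 him) (Set.mem_Iic.2 (by omega)) (hnext.trans hprev.symm)
  omega

end PathEdge

theorem Equiv.rel_apply_iff_eq_apply {V : Type*} {r : V → V → Prop} (φ : V ≃ V)
    (hφ : ∀ a b, r (φ a) (φ b) ↔ r a b) {a b : V} (hab : ∀ x, r a x ↔ x = b) (x : V) :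
    r (φ a) x ↔ x = φ b := by
  rw [← φ.apply_symm_apply x, hφ, hab, φ.apply_symm_apply, φ.symm_apply_eq]

section PathAutomorphism

variable {V : Type*} {u : ℕ → V} {m : ℕ} {φ : V ≃ V}

theorem Equiv.apply_path_zero_eq (hu : Set.InjOn u (Set.Iic m)) (hm : 0 < m)
    (hφ : ∀ a b, IsPathEdge u m (φ a) (φ b) ↔ IsPathEdge u m a b) :
    φ (u 0) = u 0 ∨ φ (u 0) = u m :=
  eq_zero_or_eq_last_of_isPathEdge_iff hu
    (φ.rel_apply_iff_eq_apply hφ fun _ => isPathEdge_zero_iff hu hm)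

theorem Equiv.apply_path_eq_self (hu : Set.InjOn u (Set.Iic m))
    (hφ : ∀ a b, IsPathEdge u m (φ a) (φ b) ↔ IsPathEdge u m a b) (h0 : φ (u 0) = u 0) :
    ∀ i ≤ m, φ (u i) = u i := by
  have hsucc : ∀ k, k + 1 ≤ m → φ (u k) = u k ∧ φ (u (k + 1)) = u (k + 1) := by
    intro k
    induction k with
    | zero =>
      intro hm
      refine ⟨h0, (isPathEdge_zero_iff hu hm).1 ?_⟩
      rw [← h0, hφ]
      exact isPathEdge_succ hm
    | succ k ih =>
      intro hk
      obtain ⟨hk0, hk1⟩ := ih (by omega)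
      refine ⟨hk1, ?_⟩
      have hedge : IsPathEdge u m (u (k + 1)) (φ (u (k + 2))) := by
        rw [← hk1, hφ]
        exact isPathEdge_succ hk
      rcases (isPathEdge_apply_iff hu (by omega)).1 hedge with ⟨-, h⟩ | ⟨-, h⟩
      · exact h
      · rw [Nat.add_sub_cancel, ← hk0] at h
        have := hu (Set.mem_Iic.2 hk) (Set.mem_Iic.2 (by omega)) (φ.injective h)
        omega
  intro i hi
  cases i with
  | zero => exact h0
  | succ k => exact (hsucc k hi).2

theorem Equiv.apply_path_last_and_one (hu : Set.InjOn u (Set.Iic m)) (hm : 0 < m)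
    (hφ : ∀ a b, IsPathEdge u m (φ a) (φ b) ↔ IsPathEdge u m a b) (h0 : φ (u 0) = u m) :
    φ (u m) = u 0 ∧ φ (u 1) = u (m - 1) := by
  refine ⟨?_, ?_⟩
  · refine (eq_zero_or_eq_last_of_isPathEdge_iff hu
      (φ.rel_apply_iff_eq_apply hφ fun _ => isPathEdge_last_iff hu hm)).resolve_right ?_
    intro h
    have := hu (Set.mem_Iic.2 le_rfl) (Set.mem_Iic.2 (Nat.zero_le m))
      (φ.injective (h.trans h0.symm))
    omega
  · refine (((φ.rel_apply_iff_eq_apply hφ fun _ => isPathEdge_zero_iff hu hm) _).1 ?_).symm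
    rw [h0]
    exact (isPathEdge_last_iff hu hm).2 rfl

theorem Equiv.apply_path_eq_self_or_swap_ends (hu : Set.InjOn u (Set.Iic m)) (hm : 0 < m)
    (hφ : ∀ a b, IsPathEdge u m (φ a) (φ b) ↔ IsPathEdge u m a b) :
    (∀ i ≤ m, φ (u i) = u i) ∨ (φ (u m) = u 0 ∧ φ (u 1) = u (m - 1)) :=
  (Equiv.apply_path_zero_eq hu hm hφ).imp (Equiv.apply_path_eq_self hu hφ)
    (Equiv.apply_path_last_and_one hu hm hφ)

end PathAutomorphism

theorem IsColorPreserving.iff_of_forall_col_iff {V : Type*} {G : SimpleGraph V}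
    {col : Sym2 V → Bool} {φ : G ≃g G} (hφ : IsColorPreserving G col φ) {P : V → V → Prop}
    (hcol : ∀ a b, col s(a, b) = true ↔ P a b) (hPG : ∀ a b, P a b → G.Adj a b) (a b : V) :
    P (φ a) (φ b) ↔ P a b := by
  refine ⟨fun h => ?_, fun h => ?_⟩
  · have hab := φ.map_adj_iff.1 (hPG _ _ h)
    rwa [← hcol, hφ a b hab, hcol] at h
  · rwa [← hcol, hφ a b (hPG a b h), hcol]

section ConsSeq

variable {V : Type*} {n : ℕ}

def consSeq (w : V) (v : Fin n → V) : ℕ → V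
  | 0 => w
  | k + 1 => if h : k < n then v ⟨k, h⟩ else w

@[simp]
theorem consSeq_zero (w : V) (v : Fin n → V) : consSeq w v 0 = w := rfl

theorem consSeq_of_pos (w : V) (v : Fin n → V) {k : ℕ} (hk0 : 0 < k) (hkn : k ≤ n) :
    consSeq w v k = v ⟨k - 1, by omega⟩ := by
  obtain ⟨k, rfl⟩ := Nat.exists_eq_add_of_lt hk0
  simp [consSeq, show k < n by omega]

@[simp]
theorem consSeq_succ (w : V) (v : Fin n → V) (i : Fin n) : consSeq w v (i + 1) = v i := by
  simp [consSeq]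

theorem injOn_consSeq {w : V} {v : Fin n → V} (hv : Function.Injective v) (hw : ∀ i, w ≠ v i) :
    Set.InjOn (consSeq w v) (Set.Iic n) := by
  intro i hi j hj h
  simp only [Set.mem_Iic] at hi hj
  rcases Nat.eq_zero_or_pos i with rfl | hi0 <;> rcases Nat.eq_zero_or_pos j with rfl | hj0
  · rfl
  · exact absurd (h.trans (consSeq_of_pos w v hj0 hj)) (hw _)
  · exact absurd (h.symm.trans (consSeq_of_pos w v hi0 hi)) (hw _)
  · rw [consSeq_of_pos w v hi0 hi, consSeq_of_pos w v hj0 hj] at h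
    have := Fin.mk.inj_iff.1 (hv h)
    omega

theorem Fin.add_mk_one_of_lt {i : Fin n} (h1 : 1 < n) (hi : i.val + 1 < n) :
    i + ⟨1, h1⟩ = ⟨i.val + 1, hi⟩ :=
  Fin.ext (by simp [Fin.val_add, Nat.mod_eq_of_lt hi])

theorem isPathEdge_consSeq_iff {w : V} {v : Fin n → V} (hn : 1 < n) (a b : V) :
    (s(a, b) = s(w, v ⟨0, by omega⟩) ∨
      ∃ i : Fin n, i.val ≤ n - 2 ∧ s(a, b) = s(v i, v (i + ⟨1, hn⟩))) ↔
      IsPathEdge (consSeq w v) n a b := by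
  constructor
  · rintro (h | ⟨i, hi, h⟩)
    · exact ⟨0, by omega, by simpa [consSeq_of_pos w v one_pos hn.le] using h⟩
    · refine ⟨i + 1, by omega, ?_⟩
      rw [h, Fin.add_mk_one_of_lt hn (by omega), consSeq_succ,
        consSeq_of_pos w v (by omega) (by omega)]
      rfl
  · rintro ⟨_ | k, hk, h⟩
    · left
      simpa [consSeq_of_pos w v one_pos hn.le] using h
    · right
      refine ⟨⟨k, by omega⟩, by simp; omega, ?_⟩
      rw [h, Fin.add_mk_one_of_lt hn (by simp; omega), consSeq_of_pos w v (by omega) (by omega),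
        consSeq_of_pos w v (by omega) (by omega)]
      rfl

end ConsSeq

theorem exists_fourCycle_of_adj_zero_pred {V : Type*} {G : SimpleGraph V} {u : ℕ → V} {m : ℕ}
    (hu : Set.InjOn u (Set.Iic m)) (hm : 3 ≤ m) (hpath : ∀ i < m, G.Adj (u i) (u (i + 1)))
    (hchord : G.Adj (u 1) (u m)) (hback : G.Adj (u 0) (u (m - 1))) :
    ∃ p q r s : V, p ≠ q ∧ p ≠ r ∧ p ≠ s ∧ q ≠ r ∧ q ≠ s ∧ r ≠ s ∧
      G.Adj p q ∧ G.Adj q r ∧ G.Adj r s ∧ G.Adj s p := by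
  obtain ⟨k, rfl⟩ : ∃ k, m = k + 3 := ⟨m - 3, by omega⟩
  have hne : ∀ i ≤ k + 3, ∀ j ≤ k + 3, i ≠ j → u i ≠ u j := fun i hi j hj hij =>
    hu.ne (Set.mem_Iic.2 hi) (Set.mem_Iic.2 hj) hij
  exact ⟨u 0, u 1, u (k + 3), u (k + 2), hne _ (by omega) _ (by omega) (by omega),
    hne _ (by omega) _ (by omega) (by omega), hne _ (by omega) _ (by omega) (by omega),
    hne _ (by omega) _ (by omega) (by omega), hne _ (by omega) _ (by omega) (by omega),
    hne _ (by omega) _ (by omega) (by omega), hpath 0 (by omega), hchord,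
    (hpath (k + 2) (by omega)).symm, hback.symm⟩

/-- Let `n ≥ 5` and let `G` contain pairwise distinct vertices
`v₀, …, v_{n-1}` forming a cycle, together with a vertex `w` (distinct from
all the `vᵢ`) adjacent to `v₀`.  Suppose `G` contains no 4-cycle.  Color grey
the edge `w v₀` together with the edges `vᵢ v_{i+1}` for `0 ≤ i ≤ n − 2` (a
grey path `w–v₀–v₁–⋯–v_{n−1}`) and all other edges black (including
`v_{n−1} v₀`).  Then every color-preserving automorphism of this 2-colored
graph fixes `w` and every `vᵢ`. -/
theorem stmt_16 {V : Type*} [DecidableEq V] (G : SimpleGraph V)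
    (n : ℕ) (hn : 5 ≤ n) (v : Fin n → V) (w : V)
    (hv : Function.Injective v) (hw : ∀ i, w ≠ v i)
    (hadj : ∀ i : Fin n, i.val ≤ n - 2 → G.Adj (v i) (v (i + ⟨1, by omega⟩)))
    (hlast : G.Adj (v ⟨n - 1, by omega⟩) (v ⟨0, by omega⟩))
    (hwadj : G.Adj w (v ⟨0, by omega⟩))
    (h4cyclefree : ¬ ∃ p q r s : V, p ≠ q ∧ p ≠ r ∧ p ≠ s ∧ q ≠ r ∧ q ≠ s ∧ r ≠ s ∧
      G.Adj p q ∧ G.Adj q r ∧ G.Adj r s ∧ G.Adj s p)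
    (φ : G ≃g G)
    (hφ : IsColorPreserving G
      (fun e => decide (e = s(w, v ⟨0, by omega⟩) ∨
        ∃ i : Fin n, i.val ≤ n - 2 ∧ e = s(v i, v (i + ⟨1, by omega⟩)))) φ) :
    φ w = w ∧ ∀ i, φ (v i) = v i := by
  set u := consSeq w v
  have hu : Set.InjOn u (Set.Iic n) := injOn_consSeq hv hw
  have hgrey := isPathEdge_consSeq_iff (w := w) (v := v) (by omega : 1 < n)
  have hPG : ∀ a b, IsPathEdge u n a b → G.Adj a b := by
    intro a b h
    rcases (hgrey a b).2 h with h | ⟨i, hi, h⟩ <;> rw [← SimpleGraph.mem_edgeSet, h]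
    exacts [hwadj, hadj i hi]
  have hP := hφ.iff_of_forall_col_iff (fun a b => decide_eq_true_iff.trans (hgrey a b)) hPG
  have hu1 : u 1 = v ⟨0, by omega⟩ := consSeq_of_pos w v one_pos (by omega)
  have hun : u n = v ⟨n - 1, by omega⟩ := consSeq_of_pos w v (by omega) le_rfl
  rcases Equiv.apply_path_eq_self_or_swap_ends hu (by omega) (φ := φ.toEquiv) hP with
    hfix | ⟨hlast_to_w, hone⟩
  · exact ⟨hfix 0 (Nat.zero_le n), fun i => by simpa [u] using hfix (i + 1) i.isLt⟩
  · refine (h4cyclefree (exists_fourCycle_of_adj_zero_pred hu (by omega)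
      (fun i hi => hPG _ _ (isPathEdge_succ hi)) (by rw [hu1, hun]; exact hlast.symm) ?_)).elim
    rw [← hlast_to_w, ← hone]
    exact φ.map_adj_iff.2 (by rw [hun, hu1]; exact hlast)
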